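/- For integers b ≥ 2, 1 ≤ n ≤ b, and any λ > 0, there exists a connected metric graph Γ of first Betti number b and total length b such that any family of pairwise homologically independent loops in Γ based at a common point, each of length at most λ(log(b) + n), has cardinality at most ⌊λ(log(b) + n)⌋ + 1. -/

import Mathlib

/-- A metric graph: a finite graph (multiple edges and loops allowed) with a
nonnegative length assigned to each edge. -/
structure MGraph where
  V : Type
  E : Type
  fV : Fintype V
  fE : Fintype E
  deV : DecidableEq V
  deE : DecidableEq E
  s : E → V
  t : E → V
  len : E → ℝ
  len_nonneg : ∀ e, 0 ≤ len e

attribute [instance] MGraph.fV MGraph.fE MGraph.deV MGraph.deE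

namespace MGraph

variable (G : MGraph)

/-- The total length (one-dimensional Hausdorff measure) of the metric graph. -/
def totalLength : ℝ := ∑ e, G.len e

/-- A dart is an edge together with an orientation. -/
def dstart (d : G.E × Bool) : G.V := if d.2 then G.s d.1 else G.t d.1

def dend (d : G.E × Bool) : G.V := if d.2 then G.t d.1 else G.s d.1

/-- `G.IsWalk u v l` : the list of darts `l` is a walk from `u` to `v`. -/
def IsWalk : G.V → G.V → List (G.E × Bool) → Prop
  | u, v, [] => u = v
  | u, v, d :: l => G.dstart d = u ∧ IsWalk (G.dend d) v l

/-- The length of a walk. -/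
def walkLen (l : List (G.E × Bool)) : ℝ := (l.map fun d => G.len d.1).sum

/-- The real cycle vector of a closed walk: its class in `H₁(Γ, ℝ) ⊆ ℝ^E`, recording
the signed number of times each edge is traversed. A family of loops is homologically
independent iff their cycle vectors are linearly independent. -/
def cycVec (l : List (G.E × Bool)) : G.E → ℝ := fun e =>
  (l.map fun d => if d.1 = e then (if d.2 then (1 : ℝ) else -1) else 0).sum

/-- The graph is connected. -/
def Connected : Prop := ∀ u v : G.V, ∃ l, G.IsWalk u v l

/-- `G.bettiEq b` : the first Betti number `e - v + 1` of the connected graph `G`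
equals `b`. -/
def bettiEq (b : ℕ) : Prop :=
  (Fintype.card G.E : ℤ) - (Fintype.card G.V : ℤ) + 1 = (b : ℤ)

/-- The path distance between two vertices. -/
noncomputable def vdist (u v : G.V) : ℝ :=
  sInf {x | ∃ l, G.IsWalk u v l ∧ G.walkLen l = x}

/-- The list of vertices visited by a walk. -/
def walkVerts (l : List (G.E × Bool)) : List G.V := l.map G.dstart

/-- The distance from a vertex to a (nonempty) walk. -/
noncomputable def distToWalk (x : G.V) (l : List (G.E × Bool)) : ℝ :=
  sInf {d | ∃ v ∈ G.walkVerts l, G.vdist x v = d}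

/-- The distance between two loops. -/
noncomputable def loopDist (l₁ l₂ : List (G.E × Bool)) : ℝ :=
  sInf {d | ∃ u ∈ G.walkVerts l₁, ∃ v ∈ G.walkVerts l₂, G.vdist u v = d}

/-- A simple loop (embedded circle): a nonempty closed walk repeating no edge and
no vertex. -/
def IsSimpleLoop (l : List (G.E × Bool)) : Prop :=
  l ≠ [] ∧ (∃ v, G.IsWalk v v l) ∧ (l.map Prod.fst).Nodup ∧ (G.walkVerts l).Nodup

end MGraph

/-! A caterpillar suffices: a path of `b` unit edges with a circle of length `1 / b` attached
at each vertex. The path edges are bridges, so the cycle vectors of closed walks are supported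
on the circles they traverse. A closed walk of length at most `L` from `x` only reaches the
circles within distance `L / 2` of `x`, and there are at most `⌊L⌋ + 1` of those; linear
independence bounds the number of walks by that count. -/

open Finset

theorem Finset.card_le_floor_add_one_of_forall_sub_le {S : Finset ℕ} {L : ℝ}
    (hS : ∀ s ∈ S, ∀ t ∈ S, (s : ℝ) - t ≤ L) : #S ≤ ⌊L⌋₊ + 1 := by
  rcases S.eq_empty_or_nonempty with rfl | hne
  · simp
  set m := S.min' hne
  have hsub : S ⊆ Icc m (m + ⌊L⌋₊) := by
    intro t ht
    have hmt : m ≤ t := S.min'_le t ht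
    have : t - m ≤ ⌊L⌋₊ :=
      Nat.le_floor (by rw [Nat.cast_sub hmt]; exact hS t ht m (S.min'_mem hne))
    exact mem_Icc.2 ⟨hmt, by omega⟩
  have := card_le_card hsub
  rw [Nat.card_Icc] at this
  omega

theorem LinearIndependent.card_le_card_of_support_subset {K ι E : Type*} [Field K]
    [Fintype ι] {v : ι → E → K} (hv : LinearIndependent K v) (T : Finset E)
    (hT : ∀ i e, v i e ≠ 0 → e ∈ T) : Fintype.card ι ≤ #T := by
  let π : (E → K) →ₗ[K] (T → K) := LinearMap.funLeft K K Subtype.val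
  have hπv : LinearIndependent K (π ∘ v) := by
    rw [Fintype.linearIndependent_iff] at hv ⊢
    intro g hg
    refine hv g (funext fun e => ?_)
    by_cases he : e ∈ T
    · simpa [π, LinearMap.funLeft, Finset.sum_apply] using congrFun hg ⟨e, he⟩
    · have hzero : ∀ i, v i e = 0 := fun i => by_contra fun h => he (hT i e h)
      simp [Finset.sum_apply, hzero]
  simpa using hπv.fintype_card_le_finrank

namespace MGraph

variable {G : MGraph}

theorem IsWalk.append {l₁ : List (G.E × Bool)} :
    ∀ {u v w : G.V} {l₂ : List (G.E × Bool)}, G.IsWalk u v l₁ → G.IsWalk v w l₂ →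
      G.IsWalk u w (l₁ ++ l₂) := by
  induction l₁ with
  | nil => intro u v w l₂ h₁ h₂; exact (show u = v from h₁) ▸ h₂
  | cons d l ih => intro u v w l₂ h₁ h₂; exact ⟨h₁.1, ih h₁.2 h₂⟩

theorem IsWalk.exists_reverse {l : List (G.E × Bool)} :
    ∀ {u v : G.V}, G.IsWalk u v l → ∃ l', G.IsWalk v u l' := by
  induction l with
  | nil => intro u v h; exact ⟨[], (show u = v from h).symm⟩
  | cons d l ih =>
    intro u v h
    obtain ⟨l', hl'⟩ := ih h.2
    obtain ⟨e, o⟩ := d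
    refine ⟨l' ++ [(e, !o)], hl'.append ⟨?_, ?_⟩⟩
    · cases o <;> rfl
    · change G.dend (e, !o) = u
      rw [← h.1]
      cases o <;> rfl

theorem connected_of_forall_isWalk (r : G.V) (h : ∀ v, ∃ l, G.IsWalk r v l) :
    G.Connected := fun u v => by
  obtain ⟨lu, hu⟩ := h u
  obtain ⟨lv, hv⟩ := h v
  obtain ⟨lu', hu'⟩ := hu.exists_reverse
  exact ⟨lu' ++ lv, hu'.append hv⟩

theorem walkLen_cons (d : G.E × Bool) (l : List (G.E × Bool)) :
    G.walkLen (d :: l) = G.len d.1 + G.walkLen l := by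
  simp [walkLen]

theorem IsWalk.exists_split_of_mem {l : List (G.E × Bool)} {d : G.E × Bool} (hd : d ∈ l) :
    ∀ {u v : G.V}, G.IsWalk u v l →
      ∃ l₁ l₂, G.IsWalk u (G.dstart d) l₁ ∧ G.IsWalk (G.dend d) v l₂ ∧
        G.walkLen l₁ + G.len d.1 + G.walkLen l₂ = G.walkLen l := by
  induction l with
  | nil => simp at hd
  | cons a l ih =>
    intro u v h
    rcases List.mem_cons.mp hd with rfl | hd
    · exact ⟨[], l, h.1.symm, h.2, by simp [walkLen]⟩
    · obtain ⟨l₁, l₂, h₁, h₂, hlen⟩ := ih hd h.2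
      exact ⟨a :: l₁, l₂, ⟨h.1, h₁⟩, h₂, by rw [walkLen_cons, walkLen_cons, ← hlen]; ring⟩

theorem IsWalk.abs_sub_le_walkLen (φ : G.V → ℝ) (hφ : ∀ e, |φ (G.s e) - φ (G.t e)| ≤ G.len e)
    {l : List (G.E × Bool)} : ∀ {u v : G.V}, G.IsWalk u v l → |φ v - φ u| ≤ G.walkLen l := by
  induction l with
  | nil => intro u v h; simp [show u = v from h, walkLen]
  | cons d l ih =>
    intro u v h
    have hd : |φ (G.dend d) - φ (G.dstart d)| ≤ G.len d.1 := by
      obtain ⟨e, o⟩ := d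
      cases o
      · simpa [dstart, dend] using hφ e
      · simpa [dstart, dend, abs_sub_comm] using hφ e
    rw [walkLen_cons, ← h.1]
    calc |φ v - φ (G.dstart d)|
        ≤ |φ v - φ (G.dend d)| + |φ (G.dend d) - φ (G.dstart d)| := abs_sub_le _ _ _
      _ ≤ G.walkLen l + G.len d.1 := add_le_add (ih h.2) hd
      _ = G.len d.1 + G.walkLen l := add_comm _ _

theorem IsWalk.abs_sub_dstart_add_abs_sub_dend_le (φ : G.V → ℝ)
    (hφ : ∀ e, |φ (G.s e) - φ (G.t e)| ≤ G.len e) {x : G.V} {l : List (G.E × Bool)}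
    (h : G.IsWalk x x l) {d : G.E × Bool} (hd : d ∈ l) :
    |φ x - φ (G.dstart d)| + |φ x - φ (G.dend d)| ≤ G.walkLen l := by
  obtain ⟨l₁, l₂, h₁, h₂, hlen⟩ := h.exists_split_of_mem hd
  have h₁' := h₁.abs_sub_le_walkLen φ hφ
  have h₂' := h₂.abs_sub_le_walkLen φ hφ
  rw [abs_sub_comm] at h₁'
  linarith [G.len_nonneg d.1]

theorem IsWalk.sum_map_sub {A : Type*} [AddCommGroup A] (χ : G.V → A)
    {l : List (G.E × Bool)} : ∀ {u v : G.V}, G.IsWalk u v l →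
      (l.map fun d => χ (G.dend d) - χ (G.dstart d)).sum = χ v - χ u := by
  induction l with
  | nil => intro u v h; simp [show u = v from h]
  | cons d l ih =>
    intro u v h
    rw [List.map_cons, List.sum_cons, ih h.2, ← h.1]
    abel

theorem exists_mem_of_cycVec_ne_zero {l : List (G.E × Bool)} {e : G.E}
    (h : G.cycVec l e ≠ 0) : ∃ d ∈ l, d.1 = e := by
  by_contra! hl
  refine h (List.sum_eq_zero fun y hy => ?_)
  obtain ⟨d, hd, rfl⟩ := List.mem_map.mp hy
  simp [hl d hd]

/-- Weighting the cycle vector by the jumps of `χ` turns it into the telescoping sum of `χ`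
along the closed walk, which vanishes; only the edge `e` carries a jump. -/
theorem IsWalk.cycVec_eq_zero_of_cut {x : G.V} {l : List (G.E × Bool)} (h : G.IsWalk x x l)
    (χ : G.V → ℝ) {e : G.E} (hcut : ∀ e' ≠ e, χ (G.s e') = χ (G.t e'))
    (he : χ (G.s e) ≠ χ (G.t e)) : G.cycVec l e = 0 := by
  have hdart : ∀ d : G.E × Bool,
      (if d.1 = e then (if d.2 then (1 : ℝ) else -1) else 0) * (χ (G.t e) - χ (G.s e)) =
        χ (G.dend d) - χ (G.dstart d) := by
    rintro ⟨e', o⟩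
    by_cases hee : e' = e
    · subst hee; cases o <;> simp [dstart, dend]
    · cases o <;> simp [dstart, dend, hee, hcut e' hee]
  have hsum : G.cycVec l e * (χ (G.t e) - χ (G.s e)) = 0 := by
    rw [cycVec, ← List.sum_map_mul_right]
    simp only [hdart]
    rw [h.sum_map_sub, sub_self]
  exact (mul_eq_zero.mp hsum).resolve_right (sub_ne_zero.mpr he.symm)

noncomputable def caterpillar (b : ℕ) : MGraph where
  V := Fin b
  E := Fin b ⊕ Fin (b - 1)
  fV := inferInstance
  fE := inferInstance
  deV := inferInstance
  deE := inferInstance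
  s := Sum.elim id fun j => ⟨j, by omega⟩
  t := Sum.elim id fun j => ⟨j + 1, by omega⟩
  len := Sum.elim (fun _ => (b : ℝ)⁻¹) fun _ => 1
  len_nonneg := by rintro (i | j) <;> simp

variable {b : ℕ}

theorem caterpillar_connected : (caterpillar b).Connected := by
  rcases Nat.eq_zero_or_pos b with rfl | hb
  · exact fun u => u.elim0
  refine connected_of_forall_isWalk (G := caterpillar b) ⟨0, hb⟩ fun ⟨v, hv⟩ => ?_
  induction v with
  | zero => exact ⟨[], rfl⟩
  | succ v ih =>
    obtain ⟨l, hl⟩ := ih (by omega)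
    have hstep : (caterpillar b).IsWalk ⟨v, by omega⟩ ⟨v + 1, hv⟩ [(.inr ⟨v, by omega⟩, true)] :=
      ⟨rfl, rfl⟩
    exact ⟨_, hl.append hstep⟩

theorem caterpillar_bettiEq (hb : 1 ≤ b) : (caterpillar b).bettiEq b := by
  change ((Fintype.card (Fin b ⊕ Fin (b - 1)) : ℕ) : ℤ) - (Fintype.card (Fin b) : ℤ) + 1 = b
  simp only [Fintype.card_sum, Fintype.card_fin]
  omega

theorem caterpillar_totalLength (hb : 1 ≤ b) : (caterpillar b).totalLength = b := by
  change ∑ e : Fin b ⊕ Fin (b - 1), Sum.elim (fun _ => (b : ℝ)⁻¹) (fun _ => (1 : ℝ)) e = b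
  rw [Fintype.sum_sum_type]
  simp [Nat.cast_sub hb, mul_inv_cancel₀ (by positivity : (b : ℝ) ≠ 0)]

theorem caterpillar_abs_sub_le_len (e : (caterpillar b).E) :
    |(Fin.val ((caterpillar b).s e) : ℝ) - Fin.val ((caterpillar b).t e)| ≤
      (caterpillar b).len e := by
  rcases e with i | j
  · change |(i : ℝ) - i| ≤ (b : ℝ)⁻¹
    simp
  · change |(j : ℝ) - ((j + 1 : ℕ) : ℝ)| ≤ 1
    simp

theorem caterpillar_cycVec_inr {x : Fin b} {l : List ((caterpillar b).E × Bool)}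
    (h : (caterpillar b).IsWalk x x l) (j : Fin (b - 1)) :
    (caterpillar b).cycVec l (Sum.inr j) = 0 := by
  refine h.cycVec_eq_zero_of_cut (fun v : Fin b => if v.1 ≤ j.1 then 0 else 1) ?_ ?_
  · rintro (i | j') hj'
    · rfl
    · have : j'.1 ≠ j.1 := fun h => hj' (congrArg Sum.inr (Fin.ext h))
      change (if j'.1 ≤ j.1 then (0 : ℝ) else 1) = if j'.1 + 1 ≤ j.1 then 0 else 1
      congr 1
      exact propext (by omega)
  · change (if j.1 ≤ j.1 then (0 : ℝ) else 1) ≠ if j.1 + 1 ≤ j.1 then 0 else 1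
    simp

theorem caterpillar_card_le {L : ℝ} {k : ℕ} {x : Fin b}
    {c : Fin k → List ((caterpillar b).E × Bool)} (hc : ∀ i, (caterpillar b).IsWalk x x (c i))
    (hlen : ∀ i, (caterpillar b).walkLen (c i) ≤ L)
    (hind : LinearIndependent ℝ fun i => (caterpillar b).cycVec (c i)) :
    k ≤ ⌊L⌋₊ + 1 := by
  set S : Finset (Fin b) := univ.filter fun t => 2 * |(x : ℝ) - t| ≤ L
  have hsupp : ∀ i e, (caterpillar b).cycVec (c i) e ≠ 0 → e ∈ S.map .inl := by
    rintro i (t | j) hne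
    · obtain ⟨d, hd, hdt⟩ := exists_mem_of_cycVec_ne_zero hne
      have hloop := (hc i).abs_sub_dstart_add_abs_sub_dend_le (fun v : Fin b => (v : ℝ))
        caterpillar_abs_sub_le_len hd
      obtain ⟨e, o⟩ := d
      subst hdt
      have hends : (caterpillar b).dstart (.inl t, o) = t ∧
          (caterpillar b).dend (.inl t, o) = t := by
        cases o <;> exact ⟨rfl, rfl⟩
      rw [hends.1, hends.2] at hloop
      exact mem_map_of_mem _ (mem_filter.2 ⟨mem_univ _, by linarith [hlen i]⟩)
    · exact absurd (caterpillar_cycVec_inr (hc i) j) hne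
  have hS : #(S.map Fin.valEmbedding) ≤ ⌊L⌋₊ + 1 := by
    refine card_le_floor_add_one_of_forall_sub_le ?_
    simp only [mem_map, mem_filter, S, mem_univ, true_and, Fin.valEmbedding_apply]
    rintro _ ⟨s, hs, rfl⟩ _ ⟨t, ht, rfl⟩
    have := abs_sub_le (s : ℝ) x t
    rw [abs_sub_comm (s : ℝ) x] at this
    linarith [le_abs_self ((s : ℝ) - t)]
  have hk := hind.card_le_card_of_support_subset _ hsupp
  rw [Fintype.card_fin] at hk
  exact (hk.trans_eq (card_map _)).trans ((card_map _).symm.trans_le hS)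

end MGraph

theorem optimality_graph_exists_general (b n : ℕ) (hb : 2 ≤ b) (lam : ℝ) :
    ∃ G : MGraph, G.Connected ∧ G.bettiEq b ∧ G.totalLength = b ∧
      ∀ (k : ℕ) (x : G.V) (c : Fin k → List (G.E × Bool)),
        (∀ i, G.IsWalk x x (c i)) →
        (∀ i, G.walkLen (c i) ≤ lam * (Real.log b + n)) →
        LinearIndependent ℝ (fun i => G.cycVec (c i)) →
        k ≤ ⌊lam * (Real.log b + n)⌋₊ + 1 :=
  ⟨MGraph.caterpillar b, MGraph.caterpillar_connected, MGraph.caterpillar_bettiEq (by omega),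
    MGraph.caterpillar_totalLength (by omega), fun _ _ _ => MGraph.caterpillar_card_le⟩

/-- For integers `b ≥ 2`, `1 ≤ n ≤ b` and any `λ > 0`, there exists a
connected metric graph `Γ` of first Betti number `b` and total length `b` such that
any family of homologically independent loops in `Γ` based at a common point, each of
length at most `λ(log b + n)`, has cardinality at most `⌊λ(log b + n)⌋ + 1`. -/
theorem optimality_graph_exists (b n : ℕ) (hb : 2 ≤ b) (hn1 : 1 ≤ n) (hnb : n ≤ b)
    (lam : ℝ) (hlam : 0 < lam) :
    ∃ G : MGraph, G.Connected ∧ G.bettiEq b ∧ G.totalLength = b ∧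
      ∀ (k : ℕ) (x : G.V) (c : Fin k → List (G.E × Bool)),
        (∀ i, G.IsWalk x x (c i)) →
        (∀ i, G.walkLen (c i) ≤ lam * (Real.log b + n)) →
        LinearIndependent ℝ (fun i => G.cycVec (c i)) →
        k ≤ ⌊lam * (Real.log b + n)⌋₊ + 1 :=
  optimality_graph_exists_general b n hb lam
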